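/- Let n ≥ 2 be an integer, set β = β̂_n and a_n = (n² − β̂_n)/(2n). Then the set of 2π-periodic C² solutions (x,y): ℝ → ℝ² of the system (E_{β̂_n}) is exactly the real linear span of the two solutions t ↦ (a_n sin(nt), cos(nt)) and t ↦ (a_n cos(nt), −sin(nt)). -/

import Mathlib

/-!
For `β = β̂_n`, the combination `u = (n² - β) y - 2x'` of a solution satisfies
`u'' = (n² + β - 1) u` with `n² + β - 1 > 0`, whose only periodic solution is `0`.
Hence `x' = aₙ n y`, which turns the second equation into `y'' = -n² y`, and the first
equation then recovers `x` from `y'`.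
-/

open Real Function

theorem Function.Periodic.deriv {E : Type*} [NormedAddCommGroup E] [NormedSpace ℝ E]
    {f : ℝ → E} {T : ℝ} (hf : Periodic f T) : Periodic (deriv f) T := fun t => by
  rw [← deriv_comp_add_const, hf.funext]

section ScalarODE

variable {p u v : ℝ → ℝ} {c k ω T : ℝ}

theorem eq_mul_exp_of_hasDerivAt_mul (hp : ∀ t, HasDerivAt p (c * p t) t) (t : ℝ) :
    p t = p 0 * exp (c * t) := by
  have hq : ∀ s, HasDerivAt (fun s => p s * exp (-c * s)) 0 s := fun s => by
    refine ((hp s).mul ((hasDerivAt_id s).const_mul (-c)).exp).congr_deriv ?_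
    simp only [id_eq]
    ring
  have hconst := is_const_of_deriv_eq_zero (fun s => (hq s).differentiableAt)
    (fun s => (hq s).deriv) t 0
  simp only [mul_zero, exp_zero, mul_one] at hconst
  rw [← hconst, mul_assoc, ← exp_add]
  simp

theorem Function.Periodic.eq_zero_of_hasDerivAt_mul (hper : Periodic p T) (hT : T ≠ 0)
    (hc : c ≠ 0) (hp : ∀ t, HasDerivAt p (c * p t) t) : p = 0 := by
  have hexp : exp (c * T) ≠ 1 := fun h => mul_ne_zero hc hT (Real.exp_eq_one_iff _ |>.mp h)
  have h0 : p 0 = 0 := by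
    have hT' : p 0 * (exp (c * T) - 1) = 0 := by
      have := eq_mul_exp_of_hasDerivAt_mul hp T
      rw [← zero_add T, hper 0, zero_add] at this
      linear_combination -this
    exact (mul_eq_zero.mp hT').resolve_right (sub_ne_zero.mpr hexp)
  funext t
  rw [eq_mul_exp_of_hasDerivAt_mul hp t, h0, zero_mul, Pi.zero_apply]

/-- The factorisation `u'' - k u = (d/dt + √k)(d/dt - √k) u` reduces this to the first-order
case. -/
theorem Function.Periodic.eq_zero_of_hasDerivAt_of_hasDerivAt_mul (hu : Periodic u T)
    (hv : Periodic v T) (hT : T ≠ 0) (hk : 0 < k) (hu' : ∀ t, HasDerivAt u (v t) t)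
    (hv' : ∀ t, HasDerivAt v (k * u t) t) : u = 0 := by
  set r := √k
  have hr : 0 < r := sqrt_pos.mpr hk
  have hr2 : r ^ 2 = k := sq_sqrt hk.le
  have hminus : v - r • u = 0 := by
    refine (hv.sub (hu.smul r)).eq_zero_of_hasDerivAt_mul hT (neg_ne_zero.mpr hr.ne') fun t => ?_
    refine ((hv' t).sub ((hu' t).const_mul r)).congr_deriv ?_
    simp only [Pi.sub_apply, Pi.smul_apply, smul_eq_mul]
    linear_combination -u t * hr2
  have hplus : v + r • u = 0 := by
    refine (hv.add (hu.smul r)).eq_zero_of_hasDerivAt_mul hT hr.ne' fun t => ?_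
    refine ((hv' t).add ((hu' t).const_mul r)).congr_deriv ?_
    simp only [Pi.add_apply, Pi.smul_apply, smul_eq_mul]
    linear_combination -u t * hr2
  funext t
  have := congrFun (congrArg₂ (· - ·) hplus hminus) t
  simp only [Pi.sub_apply, Pi.add_apply, Pi.smul_apply, smul_eq_mul, Pi.zero_apply] at this
  exact (mul_eq_zero.mp (by linear_combination this / 2 : r * u t = 0)).resolve_left hr.ne'

theorem eq_zero_of_hasDerivAt_of_hasDerivAt_neg_sq_mul (hω : ω ≠ 0)
    (hu' : ∀ t, HasDerivAt u (v t) t) (hv' : ∀ t, HasDerivAt v (-ω ^ 2 * u t) t)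
    (hu0 : u 0 = 0) (hv0 : v 0 = 0) (t : ℝ) : u t = 0 ∧ v t = 0 := by
  have hE : ∀ s, HasDerivAt (fun s => v s ^ 2 + ω ^ 2 * u s ^ 2) 0 s := fun s => by
    refine (((hv' s).pow 2).add (((hu' s).pow 2).const_mul (ω ^ 2))).congr_deriv ?_
    ring
  have hconst := is_const_of_deriv_eq_zero (fun s => (hE s).differentiableAt)
    (fun s => (hE s).deriv) t 0
  simp only [hu0, hv0, ne_eq, OfNat.ofNat_ne_zero, not_false_eq_true, zero_pow, mul_zero,
    add_zero] at hconst
  have hω2 : 0 < ω ^ 2 := by positivity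
  have hu2 : u t ^ 2 = 0 := by nlinarith [sq_nonneg (v t), sq_nonneg (u t)]
  have hv2 : v t ^ 2 = 0 := by nlinarith [sq_nonneg (v t), sq_nonneg (u t)]
  exact ⟨pow_eq_zero_iff two_ne_zero |>.mp hu2, pow_eq_zero_iff two_ne_zero |>.mp hv2⟩

theorem eq_cos_sin_of_hasDerivAt_of_hasDerivAt_neg_sq_mul (hω : ω ≠ 0)
    (hu' : ∀ t, HasDerivAt u (v t) t) (hv' : ∀ t, HasDerivAt v (-ω ^ 2 * u t) t) (t : ℝ) :
    u t = u 0 * cos (ω * t) + v 0 / ω * sin (ω * t) ∧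
      v t = v 0 * cos (ω * t) - ω * u 0 * sin (ω * t) := by
  have hcos (s : ℝ) : HasDerivAt (fun s => cos (ω * s)) (-(ω * sin (ω * s))) s := by
    simpa [mul_comm] using ((hasDerivAt_id s).const_mul ω).cos
  have hsin (s : ℝ) : HasDerivAt (fun s => sin (ω * s)) (ω * cos (ω * s)) s := by
    simpa [mul_comm] using ((hasDerivAt_id s).const_mul ω).sin
  have hz := eq_zero_of_hasDerivAt_of_hasDerivAt_neg_sq_mul hω
    (u := fun s => u s - (u 0 * cos (ω * s) + v 0 / ω * sin (ω * s)))
    (v := fun s => v s - (v 0 * cos (ω * s) - ω * u 0 * sin (ω * s)))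
    (fun s => ((hu' s).sub (((hcos s).const_mul _).add ((hsin s).const_mul _))).congr_deriv
      (by field_simp; ring))
    (fun s => ((hv' s).sub (((hcos s).const_mul _).sub ((hsin s).const_mul _))).congr_deriv
      (by field_simp; ring))
    (by simp) (by simp) t
  constructor <;> linarith [hz.1, hz.2]

end ScalarODE

noncomputable def betaHat (θ : ℝ) : ℝ := (θ ^ 2 - 3 + √(9 * θ ^ 4 - 14 * θ ^ 2 + 9)) / 4

theorem betaHat_quadratic (θ : ℝ) :
    2 * betaHat θ ^ 2 + (3 - θ ^ 2) * betaHat θ + θ ^ 2 - θ ^ 4 = 0 := by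
  have hdisc : 0 ≤ 9 * θ ^ 4 - 14 * θ ^ 2 + 9 := by nlinarith [sq_nonneg (θ ^ 2 - 1), sq_nonneg θ]
  unfold betaHat
  linear_combination (1 / 8 : ℝ) * sq_sqrt hdisc

theorem betaHat_pos {θ : ℝ} (hθ : 1 < θ) : 0 < betaHat θ := by
  have hθ2 : 1 < θ ^ 2 := by nlinarith
  have : 3 - θ ^ 2 < √(9 * θ ^ 4 - 14 * θ ^ 2 + 9) := lt_sqrt_of_sq_lt (by nlinarith)
  unfold betaHat
  linarith

section EulerSystem

variable {β n a T : ℝ} {x y x' y' : ℝ → ℝ}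

theorem mul_add_eq_of_quadratic (hQ : 2 * β ^ 2 + (3 - n ^ 2) * β + n ^ 2 - n ^ 4 = 0)
    (ha : a * (2 * n) = n ^ 2 - β) (hn : n ≠ 0) : a * (n ^ 2 + 2 * β + 3) = 2 * n := by
  refine mul_left_cancel₀ (mul_ne_zero two_ne_zero hn) ?_
  linear_combination (n ^ 2 + 2 * β + 3) * ha - hQ

noncomputable def eulerMode (a n c d t : ℝ) : ℝ × ℝ :=
  (a * (c * sin (n * t) + d * cos (n * t)), c * cos (n * t) - d * sin (n * t))

theorem hasDerivAt_eulerMode (a n c d t : ℝ) :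
    HasDerivAt (eulerMode a n c d) (n • eulerMode a n (-d) c t) t := by
  have hcos := ((hasDerivAt_id t).const_mul n).cos
  have hsin := ((hasDerivAt_id t).const_mul n).sin
  refine ((((hsin.const_mul c).add (hcos.const_mul d)).const_mul a).prodMk
    ((hcos.const_mul c).sub (hsin.const_mul d))).congr_deriv ?_
  ext <;> simp only [eulerMode, id_eq, Prod.smul_mk, smul_eq_mul] <;> ring

theorem deriv_eulerMode (a n c d : ℝ) : deriv (eulerMode a n c d) = n • eulerMode a n (-d) c :=
  funext fun t => (hasDerivAt_eulerMode a n c d t).deriv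

theorem deriv_deriv_eulerMode (a n c d : ℝ) :
    deriv (deriv (eulerMode a n c d)) = (-n ^ 2) • eulerMode a n c d := by
  funext t
  rw [deriv_eulerMode, ((hasDerivAt_eulerMode a n (-d) c t).const_smul n).deriv]
  ext <;> simp only [eulerMode, Pi.smul_apply, Prod.smul_mk, smul_eq_mul] <;> ring

theorem contDiff_eulerMode {k : WithTop ℕ∞} (a n c d : ℝ) : ContDiff ℝ k (eulerMode a n c d) := by
  unfold eulerMode
  fun_prop

theorem periodic_eulerMode (a c d : ℝ) (n : ℕ) : Periodic (eulerMode a n c d) (2 * π) := by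
  intro t
  simp only [eulerMode, mul_add, sin_add_nat_mul_two_pi, cos_add_nat_mul_two_pi]

theorem eulerMode_solves (hQ : 2 * β ^ 2 + (3 - n ^ 2) * β + n ^ 2 - n ^ 4 = 0)
    (ha : a * (2 * n) = n ^ 2 - β) (hn : n ≠ 0) (c d t : ℝ) :
    (deriv (deriv (eulerMode a n c d)) t).1 =
        (2 * β + 3) * (eulerMode a n c d t).1 + 2 * (deriv (eulerMode a n c d) t).2 ∧
      (deriv (deriv (eulerMode a n c d)) t).2 =
        -β * (eulerMode a n c d t).2 - 2 * (deriv (eulerMode a n c d) t).1 := by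
  have hkey := mul_add_eq_of_quadratic hQ ha hn
  rw [deriv_deriv_eulerMode, deriv_eulerMode]
  simp only [eulerMode, Pi.smul_apply, Prod.smul_mk, smul_eq_mul]
  constructor
  · linear_combination (-(c * sin (n * t) + d * cos (n * t))) * hkey
  · linear_combination (c * cos (n * t) - d * sin (n * t)) * ha

/-- The Euler system `(E_β)` as a first-order system in `(x, y, x', y')`. -/
structure IsEulerSolution (β : ℝ) (x y x' y' : ℝ → ℝ) : Prop where
  hasDerivAt_x (t : ℝ) : HasDerivAt x (x' t) t
  hasDerivAt_y (t : ℝ) : HasDerivAt y (y' t) t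
  hasDerivAt_x' (t : ℝ) : HasDerivAt x' ((2 * β + 3) * x t + 2 * y' t) t
  hasDerivAt_y' (t : ℝ) : HasDerivAt y' (-β * y t - 2 * x' t) t

namespace IsEulerSolution

variable (hs : IsEulerSolution β x y x' y')
include hs

theorem periodic_x' (hx : Periodic x T) : Periodic x' T := fun t => by
  rw [← (hs.hasDerivAt_x t).deriv, ← (hs.hasDerivAt_x (t + T)).deriv, hx.deriv]

theorem periodic_y' (hy : Periodic y T) : Periodic y' T := fun t => by
  rw [← (hs.hasDerivAt_y t).deriv, ← (hs.hasDerivAt_y (t + T)).deriv, hy.deriv]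

/-- The quadratic satisfied by `β̂_n` is exactly the condition for `u = (n² - β) y - 2 x'` to
decouple: `u'' = (n² + β - 1) u`. -/
theorem hasDerivAt_combination (hQ : 2 * β ^ 2 + (3 - n ^ 2) * β + n ^ 2 - n ^ 4 = 0) (t : ℝ) :
    HasDerivAt (fun t => (n ^ 2 - β) * y' t - 2 * ((2 * β + 3) * x t + 2 * y' t))
      ((n ^ 2 + β - 1) * ((n ^ 2 - β) * y t - 2 * x' t)) t := by
  refine (((hs.hasDerivAt_y' t).const_mul _).sub
    ((((hs.hasDerivAt_x t).const_mul _).add ((hs.hasDerivAt_y' t).const_mul 2)).const_mul 2)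
    ).congr_deriv ?_
  linear_combination y t * hQ

theorem two_mul_x'_eq_of_periodic (hQ : 2 * β ^ 2 + (3 - n ^ 2) * β + n ^ 2 - n ^ 4 = 0)
    (hK : 0 < n ^ 2 + β - 1) (hx : Periodic x T) (hy : Periodic y T) (hT : T ≠ 0) (t : ℝ) :
    2 * x' t = (n ^ 2 - β) * y t := by
  have hx' := hs.periodic_x' hx
  have hy' := hs.periodic_y' hy
  have hu := Periodic.eq_zero_of_hasDerivAt_of_hasDerivAt_mul
    (u := fun t => (n ^ 2 - β) * y t - 2 * x' t)
    (v := fun t => (n ^ 2 - β) * y' t - 2 * ((2 * β + 3) * x t + 2 * y' t))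
    (fun t => by simp only [hy t, hx' t]) (fun t => by simp only [hy' t, hx t]) hT hK
    (fun t => ((hs.hasDerivAt_y t).const_mul _).sub ((hs.hasDerivAt_x' t).const_mul 2))
    (hs.hasDerivAt_combination hQ)
  have hut : (n ^ 2 - β) * y t - 2 * x' t = 0 := congrFun hu t
  linarith

theorem exists_eq_eulerMode_of_periodic (hQ : 2 * β ^ 2 + (3 - n ^ 2) * β + n ^ 2 - n ^ 4 = 0)
    (hn : n ≠ 0) (hK : 0 < n ^ 2 + β - 1) (hβ : 2 * β + 3 ≠ 0) (ha : a * (2 * n) = n ^ 2 - β)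
    (hx : Periodic x T) (hy : Periodic y T) (hT : T ≠ 0) :
    ∃ c d, ∀ t, (x t, y t) = eulerMode a n c d t := by
  have hx' (t : ℝ) : x' t = a * n * y t := by
    linear_combination (hs.two_mul_x'_eq_of_periodic hQ hK hx hy hT t - y t * ha) / 2
  have hy'' (t : ℝ) : HasDerivAt y' (-n ^ 2 * y t) t :=
    (hs.hasDerivAt_y' t).congr_deriv (by rw [hx' t]; linear_combination -y t * ha)
  refine ⟨y 0, -(y' 0 / n), fun t => ?_⟩
  obtain ⟨hyt, hy't⟩ := eq_cos_sin_of_hasDerivAt_of_hasDerivAt_neg_sq_mul hn hs.hasDerivAt_y hy'' t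
  have hx'' : HasDerivAt x' (a * n * y' t) t := by
    rw [funext hx']
    exact (hs.hasDerivAt_y t).const_mul _
  have hxt : (2 * β + 3) * x t = (a * n - 2) * y' t := by
    linarith [(hs.hasDerivAt_x' t).unique hx'']
  have hkey := mul_add_eq_of_quadratic hQ ha hn
  refine Prod.ext (mul_left_cancel₀ hβ ?_) ?_
  · simp only [eulerMode]
    rw [hxt, hy't]
    field_simp
    linear_combination (y' 0 * cos (n * t) - n * y 0 * sin (n * t)) * hkey
  · simp only [eulerMode]
    rw [hyt]
    field_simp
    ring

end IsEulerSolution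

theorem IsEulerSolution.of_contDiff {f : ℝ → ℝ × ℝ} (hf : ContDiff ℝ 2 f)
    (hode : ∀ t, (deriv (deriv f) t).1 = (2 * β + 3) * (f t).1 + 2 * (deriv f t).2 ∧
      (deriv (deriv f) t).2 = -β * (f t).2 - 2 * (deriv f t).1) :
    IsEulerSolution β (fun t => (f t).1) (fun t => (f t).2) (fun t => (deriv f t).1)
      (fun t => (deriv f t).2) where
  hasDerivAt_x t := (hf.differentiable (by norm_num) t).hasDerivAt.fst
  hasDerivAt_y t := (hf.differentiable (by norm_num) t).hasDerivAt.snd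
  hasDerivAt_x' t := (hode t).1 ▸ (hf.differentiable_deriv_two t).hasDerivAt.fst
  hasDerivAt_y' t := (hode t).2 ▸ (hf.differentiable_deriv_two t).hasDerivAt.snd

end EulerSystem

/-- At `β = β̂_n` (`n ≥ 2`), the `2π`-periodic solutions of the Euler system at `e = 0` are
exactly the span of `t ↦ (aₙ sin nt, cos nt)` and `t ↦ (aₙ cos nt, −sin nt)`,
with `aₙ = (n² − β̂_n)/(2n)`. -/
theorem euler_periodic_kernel (n : ℕ) (hn : 2 ≤ n) (β a : ℝ)
    (hβ : β = ((n : ℝ) ^ 2 - 3 + Real.sqrt (9 * (n : ℝ) ^ 4 - 14 * (n : ℝ) ^ 2 + 9)) / 4)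
    (ha : a = ((n : ℝ) ^ 2 - β) / (2 * (n : ℝ))) :
    {f : ℝ → ℝ × ℝ | ContDiff ℝ 2 f ∧ (∀ t, f (t + 2 * Real.pi) = f t) ∧
      ∀ t, (deriv (deriv f) t).1 = (2 * β + 3) * (f t).1 + 2 * (deriv f t).2 ∧
           (deriv (deriv f) t).2 = -β * (f t).2 - 2 * (deriv f t).1}
    = ↑(Submodule.span ℝ
        {(fun t : ℝ => (a * Real.sin ((n : ℝ) * t), Real.cos ((n : ℝ) * t))),
         (fun t : ℝ => (a * Real.cos ((n : ℝ) * t), -Real.sin ((n : ℝ) * t)))}) := by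
  have hn1 : (1 : ℝ) < n := by exact_mod_cast hn
  have hQ : 2 * β ^ 2 + (3 - (n : ℝ) ^ 2) * β + (n : ℝ) ^ 2 - (n : ℝ) ^ 4 = 0 := by
    rw [hβ]; exact betaHat_quadratic n
  have hβ0 : 0 < β := by rw [hβ]; exact betaHat_pos hn1
  have ha' : a * (2 * n) = (n : ℝ) ^ 2 - β := by rw [ha]; field_simp
  have hspan (c d : ℝ) : c • (fun t : ℝ => (a * sin (n * t), cos (n * t))) +
      d • (fun t : ℝ => (a * cos (n * t), -sin (n * t))) = eulerMode a n c d := by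
    funext t
    ext <;> simp only [eulerMode, Pi.add_apply, Pi.smul_apply, Prod.smul_mk, smul_eq_mul,
      Prod.fst_add, Prod.snd_add] <;> ring
  ext f
  simp only [Set.mem_ofPred_eq, SetLike.mem_coe, Submodule.mem_span_pair, hspan]
  constructor
  · rintro ⟨hf, hper, hode⟩
    obtain ⟨c, d, hcd⟩ := (IsEulerSolution.of_contDiff hf hode).exists_eq_eulerMode_of_periodic
      hQ (by positivity) (by nlinarith) (by positivity) ha' (fun t => congrArg Prod.fst (hper t))
      (fun t => congrArg Prod.snd (hper t)) two_pi_pos.ne'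
    exact ⟨c, d, funext fun t => (hcd t).symm⟩
  · rintro ⟨c, d, rfl⟩
    exact ⟨contDiff_eulerMode a n c d, periodic_eulerMode a c d n,
      eulerMode_solves hQ ha' (by positivity) c d⟩
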